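/- arXiv:2504.13325 — 5 statements merged into one kernel-verified Lean document; each statement's English description precedes it below -/
import Mathlib

section
/- Let Θ and Y be measurable spaces, let μ be a probability measure on Θ (the prior), let κ be a Markov kernel from Θ to Y, and let m := μ ∘ κ denote the mixture measure on Y, i.e., m(B) = ∫_Θ κ(θ)(B) dμ(θ). Then for every probability measure R on Y, the Bayesian redundancy decomposes as ∫_Θ D(κ(θ) ‖ R) dμ(θ) = ∫_Θ D(κ(θ) ‖ m) dμ(θ) + D(m ‖ R), where D(·‖·) denotes Kullback–Leibler divergence with values in [0, ∞]. Consequently ∫_Θ D(κ(θ) ‖ R) dμ(θ) ≥ ∫_Θ D(κ(θ) ‖ m) dμ(θ) for every probability measure R, and when ∫_Θ D(κ(θ) ‖ m) dμ(θ) is finite, equality holds if and only if R = m. -/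
/-!
For `P ≪ Q ≪ R` the log-likelihood ratios add up, `llr P R = llr P Q + llr Q R` `P`-a.e. Splitting
each ratio into positive and negative parts, and using that the negative part of `llr P Q` has
`P`-integral at most `1`, this becomes the identity
`D(P‖R) + ∫ (llr Q R)⁻ dP = D(P‖Q) + ∫ (llr Q R)⁺ dP` in `[0, ∞]`, with no integrability assumption.
Take `Q = m`: if `m ≪ R`, then for `μ`-a.e. `θ` the measure `κ θ` gives no mass to `{dm/dR = 0}`,
so `κ θ ≪ R` implies `κ θ ≪ m` and the identity applies. Integrating it over `θ` (`∫ κ θ dμ = m`)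
gives the decomposition. If `m` is not `≪ R`, a `μ`-positive set of `θ` has `κ θ` not `≪ R`, and
both sides are infinite. Uniqueness is the equality case of Gibbs' inequality.
-/

open MeasureTheory
open scoped ENNReal

open Classical in
/-- Kullback–Leibler divergence with values in `[0, ∞]`: `∫ log(dP/dR) dP` when `P ≪ R`
and the log-likelihood ratio is integrable, and `∞` otherwise. -/
noncomputable def klDiv' {Y : Type*} [MeasurableSpace Y] (P R : Measure Y) : ℝ≥0∞ :=
  if P ≪ R ∧ Integrable (llr P R) P then ENNReal.ofReal (∫ y, llr P R y ∂P) else ⊤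

open ProbabilityTheory InformationTheory

lemma ENNReal.ofReal_abs (r : ℝ) : ENNReal.ofReal |r| = ENNReal.ofReal r + ENNReal.ofReal (-r) := by
  rcases le_total 0 r with h | h
  · rw [abs_of_nonneg h, ENNReal.ofReal_of_nonpos (neg_nonpos.mpr h), add_zero]
  · rw [abs_of_nonpos h, ENNReal.ofReal_of_nonpos h, zero_add]

lemma ENNReal.ofReal_add_add_ofReal_neg (x y : ℝ) :
    ENNReal.ofReal (x + y) + ENNReal.ofReal (-x) + ENNReal.ofReal (-y)
      = ENNReal.ofReal x + ENNReal.ofReal y + ENNReal.ofReal (-(x + y)) := by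
  have h (t : ℝ) : ENNReal.ofReal t = ENNReal.ofReal (max t 0) := by
    rcases le_total 0 t with ht | ht <;> simp [ht]
  simp only [h x, h y, h (-x), h (-y), h (x + y), h (-(x + y))]
  rw [← ENNReal.ofReal_add (le_max_right _ _) (le_max_right _ _),
    ← ENNReal.ofReal_add (by positivity) (le_max_right _ _),
    ← ENNReal.ofReal_add (le_max_right _ _) (le_max_right _ _),
    ← ENNReal.ofReal_add (by positivity) (le_max_right _ _)]
  congr 1
  have := max_zero_sub_max_neg_zero_eq_self x
  have := max_zero_sub_max_neg_zero_eq_self y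
  have := max_zero_sub_max_neg_zero_eq_self (x + y)
  linarith

section
variable {α : Type*} [MeasurableSpace α]

lemma integrable_iff_lintegral_ofReal_ne_top {μ : Measure α} {f : α → ℝ}
    (hf : AEStronglyMeasurable f μ) :
    Integrable f μ ↔ ∫⁻ x, ENNReal.ofReal (f x) ∂μ ≠ ∞ ∧ ∫⁻ x, ENNReal.ofReal (-f x) ∂μ ≠ ∞ := by
  simp_rw [Integrable, hf, true_and, HasFiniteIntegral, Real.enorm_eq_ofReal_abs,
    ENNReal.ofReal_abs, lintegral_add_left' hf.aemeasurable.ennreal_ofReal, ENNReal.add_lt_top,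
    lt_top_iff_ne_top]

variable {P Q R : Measure α}

lemma lintegral_ofReal_neg_llr_le [SigmaFinite P] [SigmaFinite Q] (h : P ≪ Q) :
    ∫⁻ x, ENNReal.ofReal (-llr P Q x) ∂P ≤ Q Set.univ :=
  calc ∫⁻ x, ENNReal.ofReal (-llr P Q x) ∂P = ∫⁻ x, ENNReal.ofReal (llr Q P x) ∂P :=
        lintegral_congr_ae <| (neg_llr h).mono fun _ hx => congrArg ENNReal.ofReal hx
    _ ≤ ∫⁻ x, Q.rnDeriv P x ∂P := lintegral_mono fun _ =>
        (ENNReal.ofReal_le_ofReal (Real.log_le_self ENNReal.toReal_nonneg)).trans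
          ENNReal.ofReal_toReal_le
    _ ≤ Q Set.univ := Measure.lintegral_rnDeriv_le

lemma klDiv_add_lintegral_ofReal_neg_llr [IsProbabilityMeasure P] [IsProbabilityMeasure Q]
    (h : P ≪ Q) :
    klDiv P Q + ∫⁻ x, ENNReal.ofReal (-llr P Q x) ∂P = ∫⁻ x, ENNReal.ofReal (llr P Q x) ∂P := by
  have hneg : ∫⁻ x, ENNReal.ofReal (-llr P Q x) ∂P ≠ ∞ :=
    ((lintegral_ofReal_neg_llr_le h).trans_lt (measure_lt_top Q _)).ne
  have hint_iff :=
    integrable_iff_lintegral_ofReal_ne_top (μ := P) (measurable_llr P Q).aestronglyMeasurable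
  by_cases hint : Integrable (llr P Q) P
  · have hpos := (hint_iff.mp hint).1
    have hgibbs : 0 ≤ ∫ x, llr P Q x ∂P := by
      simpa using integral_llr_add_sub_measure_univ_nonneg h hint
    rw [integral_eq_lintegral_pos_part_sub_lintegral_neg_part hint, sub_nonneg,
      ENNReal.toReal_le_toReal hneg hpos] at hgibbs
    rw [klDiv_of_ac_of_integrable h hint,
      integral_eq_lintegral_pos_part_sub_lintegral_neg_part hint]
    simp only [probReal_univ, add_sub_cancel_right]
    rw [← ENNReal.toReal_sub_of_le hgibbs hpos, ENNReal.ofReal_toReal (ENNReal.sub_ne_top hpos),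
      tsub_add_cancel_of_le hgibbs]
  · rw [klDiv_of_not_integrable hint, top_add, eq_comm]
    by_contra hpos
    exact hint (hint_iff.mpr ⟨hpos, hneg⟩)

lemma llr_ae_eq_llr_add_llr [SigmaFinite P] [SigmaFinite Q] [SigmaFinite R] (hPQ : P ≪ Q)
    (hQR : Q ≪ R) : llr P R =ᵐ[P] llr P Q + llr Q R := by
  have hPR : P ≪ R := hPQ.trans hQR
  filter_upwards [hPR.ae_le (Measure.rnDeriv_mul_rnDeriv hPQ), Measure.rnDeriv_pos hPQ,
    hPQ.ae_le (P.rnDeriv_lt_top Q), hPQ.ae_le (Measure.rnDeriv_pos hQR),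
    hPR.ae_le (Q.rnDeriv_lt_top R)] with x hmul hPQ_pos hPQ_lt hQR_pos hQR_lt
  rw [Pi.add_apply, llr, llr, llr, ← hmul, Pi.mul_apply, ENNReal.toReal_mul,
    Real.log_mul (ENNReal.toReal_pos hPQ_pos.ne' hPQ_lt.ne).ne'
      (ENNReal.toReal_pos hQR_pos.ne' hQR_lt.ne).ne']

lemma absolutelyContinuous_withDensity_of_ae_ne_zero {g : α → ℝ≥0∞} (hg : AEMeasurable g R)
    (hPR : P ≪ R) (hg_ne : ∀ᵐ x ∂P, g x ≠ 0) : P ≪ R.withDensity g := by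
  refine Measure.AbsolutelyContinuous.mk fun s hs hs0 => ?_
  rw [withDensity_apply _ hs, lintegral_eq_zero_iff' hg.restrict, Filter.EventuallyEq,
    ae_restrict_iff' hs] at hs0
  rw [measure_eq_zero_iff_ae_notMem]
  filter_upwards [hPR.ae_le hs0, hg_ne] with x hx_zero hx_ne hxs using hx_ne (hx_zero hxs)

lemma klDiv_add_lintegral_ofReal_neg_llr_eq [IsProbabilityMeasure P] [IsProbabilityMeasure Q]
    [IsProbabilityMeasure R] (hPQ : P ≪ Q) (hQR : Q ≪ R) :
    klDiv P R + ∫⁻ x, ENNReal.ofReal (-llr Q R x) ∂P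
      = klDiv P Q + ∫⁻ x, ENNReal.ofReal (llr Q R x) ∂P := by
  have hPR : P ≪ R := hPQ.trans hQR
  have hsplit : ∫⁻ x, ENNReal.ofReal (llr P R x) ∂P + ∫⁻ x, ENNReal.ofReal (-llr P Q x) ∂P
        + ∫⁻ x, ENNReal.ofReal (-llr Q R x) ∂P
      = ∫⁻ x, ENNReal.ofReal (llr P Q x) ∂P + ∫⁻ x, ENNReal.ofReal (llr Q R x) ∂P
        + ∫⁻ x, ENNReal.ofReal (-llr P R x) ∂P := by
    rw [← lintegral_add_left (measurable_llr P R).ennreal_ofReal,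
      ← lintegral_add_right _ (by fun_prop : Measurable fun x => ENNReal.ofReal (-llr Q R x)),
      ← lintegral_add_left (measurable_llr P Q).ennreal_ofReal,
      ← lintegral_add_right _ (by fun_prop : Measurable fun x => ENNReal.ofReal (-llr P R x))]
    refine lintegral_congr_ae ?_
    filter_upwards [llr_ae_eq_llr_add_llr hPQ hQR] with x hx
    rw [hx, Pi.add_apply, ENNReal.ofReal_add_add_ofReal_neg]
  rw [← klDiv_add_lintegral_ofReal_neg_llr hPR, ← klDiv_add_lintegral_ofReal_neg_llr hPQ] at hsplit
  have hfin : ∫⁻ x, ENNReal.ofReal (-llr P R x) ∂P + ∫⁻ x, ENNReal.ofReal (-llr P Q x) ∂P ≠ ∞ :=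
    ENNReal.add_ne_top.mpr ⟨((lintegral_ofReal_neg_llr_le hPR).trans_lt (measure_lt_top R _)).ne,
      ((lintegral_ofReal_neg_llr_le hPQ).trans_lt (measure_lt_top Q _)).ne⟩
  refine (ENNReal.add_left_inj hfin).mp ?_
  calc _ = _ := by ring
    _ = _ := hsplit
    _ = _ := by ring

end

section
variable {Θ Y : Type*} [MeasurableSpace Θ] [MeasurableSpace Y] {μ : Measure Θ} {κ : Kernel Θ Y}
  {R : Measure Y}

lemma absolutelyContinuous_comp_of_lintegral_klDiv_ne_top (h : ∫⁻ θ, klDiv (κ θ) R ∂μ ≠ ∞) :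
    κ ∘ₘ μ ≪ R := by
  refine Measure.AbsolutelyContinuous.mk fun t ht hRt => ?_
  have hu : MeasurableSet {θ | κ θ t ≠ 0} := (κ.measurable_coe ht (measurableSet_singleton 0)).compl
  have hμu : μ {θ | κ θ t ≠ 0} = 0 := by
    by_contra hμu
    refine h (eq_top_iff.mpr ?_)
    calc ∞ = ∫⁻ θ, {θ | κ θ t ≠ 0}.indicator (fun _ => ∞) θ ∂μ := by
          rw [lintegral_indicator_const hu, ENNReal.top_mul hμu]
      _ ≤ ∫⁻ θ, klDiv (κ θ) R ∂μ := lintegral_mono <| Set.indicator_le fun θ hθ =>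
          (klDiv_of_not_ac fun hac => hθ (hac hRt)).ge
  rw [Measure.bind_apply ht κ.aemeasurable, lintegral_eq_zero_iff (κ.measurable_coe ht)]
  exact measure_eq_zero_iff_ae_notMem.mp hμu |>.mono fun _ hθ => not_not.mp hθ

variable [IsProbabilityMeasure μ] [IsMarkovKernel κ] [IsProbabilityMeasure R]

lemma lintegral_klDiv_eq_add_of_absolutelyContinuous (hac : κ ∘ₘ μ ≪ R) :
    ∫⁻ θ, klDiv (κ θ) R ∂μ = ∫⁻ θ, klDiv (κ θ) (κ ∘ₘ μ) ∂μ + klDiv (κ ∘ₘ μ) R := by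
  set m := κ ∘ₘ μ
  have hpointwise : ∀ᵐ θ ∂μ, klDiv (κ θ) R + ∫⁻ y, ENNReal.ofReal (-llr m R y) ∂κ θ
      = klDiv (κ θ) m + ∫⁻ y, ENNReal.ofReal (llr m R y) ∂κ θ := by
    filter_upwards [Measure.ae_ae_of_ae_comp (Measure.rnDeriv_pos hac)] with θ hθ
    by_cases hθR : κ θ ≪ R
    · have hθm : κ θ ≪ m := by
        simpa only [Measure.withDensity_rnDeriv_eq m R hac] using
          absolutelyContinuous_withDensity_of_ae_ne_zero
            (Measure.measurable_rnDeriv m R).aemeasurable hθR (hθ.mono fun _ h => h.ne')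
      exact klDiv_add_lintegral_ofReal_neg_llr_eq hθm hac
    · rw [klDiv_of_not_ac hθR, klDiv_of_not_ac fun hθm => hθR (hθm.trans hac), top_add, top_add]
  have hmix {f : Y → ℝ≥0∞} (hf : Measurable f) : ∫⁻ θ, ∫⁻ y, f y ∂κ θ ∂μ = ∫⁻ y, f y ∂m :=
    (Measure.lintegral_bind κ.aemeasurable hf.aemeasurable).symm
  have hintegrated : ∫⁻ θ, klDiv (κ θ) R ∂μ + ∫⁻ y, ENNReal.ofReal (-llr m R y) ∂m
      = ∫⁻ θ, klDiv (κ θ) m ∂μ + ∫⁻ y, ENNReal.ofReal (llr m R y) ∂m := by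
    rw [← hmix (by fun_prop), ← hmix (by fun_prop), ← lintegral_add_right _ (by fun_prop),
      ← lintegral_add_right _ (by fun_prop)]
    exact lintegral_congr_ae hpointwise
  rw [← klDiv_add_lintegral_ofReal_neg_llr hac, ← add_assoc] at hintegrated
  exact (ENNReal.add_left_inj ((lintegral_ofReal_neg_llr_le hac).trans_lt
    (measure_lt_top R _)).ne).mp hintegrated

theorem lintegral_klDiv_eq_lintegral_klDiv_comp_add_klDiv :
    ∫⁻ θ, klDiv (κ θ) R ∂μ = ∫⁻ θ, klDiv (κ θ) (κ ∘ₘ μ) ∂μ + klDiv (κ ∘ₘ μ) R := by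
  by_cases hac : κ ∘ₘ μ ≪ R
  · exact lintegral_klDiv_eq_add_of_absolutelyContinuous hac
  · have htop : ∫⁻ θ, klDiv (κ θ) R ∂μ = ∞ := by
      by_contra h
      exact hac (absolutelyContinuous_comp_of_lintegral_klDiv_ne_top h)
    rw [htop, klDiv_of_not_ac hac, add_top]

end

lemma klDiv'_eq_klDiv {Y : Type*} [MeasurableSpace Y] (P R : Measure Y) [IsProbabilityMeasure P]
    [IsProbabilityMeasure R] : klDiv' P R = klDiv P R := by
  unfold klDiv'
  split_ifs with h
  · simp [klDiv_of_ac_of_integrable h.1 h.2]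
  · exact (klDiv_eq_top_iff.mpr fun hac hint => h ⟨hac, hint⟩).symm

/-- The mixture distribution minimizes the Bayesian redundancy: the redundancy of any `R`
decomposes as the redundancy of the mixture `m` plus `D(m‖R)`; hence `m` is the minimizer,
and it is the unique one when the minimal redundancy is finite. -/
theorem mixture_minimizes_bayesian_redundancy {Θ Y : Type*}
    [MeasurableSpace Θ] [MeasurableSpace Y]
    (μ : Measure Θ) [IsProbabilityMeasure μ]
    (κ : ProbabilityTheory.Kernel Θ Y) [ProbabilityTheory.IsMarkovKernel κ]
    (m : Measure Y) (hm : m = μ.bind fun θ => κ θ) :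
    (∀ R : Measure Y, IsProbabilityMeasure R →
      (∫⁻ θ, klDiv' (κ θ) R ∂μ = (∫⁻ θ, klDiv' (κ θ) m ∂μ) + klDiv' m R ∧
        ∫⁻ θ, klDiv' (κ θ) m ∂μ ≤ ∫⁻ θ, klDiv' (κ θ) R ∂μ)) ∧
    ((∫⁻ θ, klDiv' (κ θ) m ∂μ) ≠ ⊤ →
      ∀ R : Measure Y, IsProbabilityMeasure R →
        ((∫⁻ θ, klDiv' (κ θ) R ∂μ) = ∫⁻ θ, klDiv' (κ θ) m ∂μ ↔ R = m)) := by
  subst hm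
  have hdecomp (R : Measure Y) [IsProbabilityMeasure R] :
      ∫⁻ θ, klDiv' (κ θ) R ∂μ = ∫⁻ θ, klDiv' (κ θ) (κ ∘ₘ μ) ∂μ + klDiv' (κ ∘ₘ μ) R := by
    simp only [klDiv'_eq_klDiv]
    exact lintegral_klDiv_eq_lintegral_klDiv_comp_add_klDiv
  refine ⟨fun R _ => ⟨hdecomp R, hdecomp R ▸ le_self_add⟩, fun hfin R _ => ⟨fun heq => ?_, ?_⟩⟩
  · rw [hdecomp R] at heq
    have hzero : klDiv' (κ ∘ₘ μ) R = 0 :=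
      (ENNReal.add_right_inj hfin).mp (heq.trans (add_zero _).symm)
    rw [klDiv'_eq_klDiv, klDiv_eq_zero_iff] at hzero
    exact hzero.symm
  · rintro rfl
    rfl
end

section
/- For every integer m ≥ 1, every radius r > 0 and every integer L ≥ 1, the closed Euclidean ball B̄(0, r) ⊂ ℝ^m can be partitioned into L pairwise disjoint measurable sets V₁, …, V_L whose union is B̄(0, r) and such that each V_ℓ has diameter at most 6 r L^{−1/m}. -/
/-!
A maximal `ε`-separated subset of the ball `B̄(0, r)` in `ℝ^m` is an `ε`-net of it, and the
disjoint balls of radius `ε / 2` around its points fit into `B̄(0, r + ε / 2)`, so by comparing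
volumes it has at most `(2r/ε + 1)^m ≤ (3r/ε)^m` points when `ε ≤ r`. For `ε = 3 r L^{-1/m}`
this is at most `L` (and if `ε > r` one ball suffices). Disjointifying the `L` closed `ε`-balls
around the net points, intersected with `B̄(0, r)`, gives the partition, with pieces of diameter
at most `2ε`.
-/

open Metric MeasureTheory Set Module
open scoped ENNReal NNReal

theorem exists_fin_subset_range_of_encard_le {α : Type*} [Nonempty α] {s : Set α} {L : ℕ}
    (hs : s.encard ≤ L) : ∃ x : Fin L → α, s ⊆ range x := by
  obtain ⟨n, f, rfl⟩ := (Set.finite_of_encard_le_coe hs).fin_embedding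
  have hn : n ≤ L := by simpa using f.injective.encard_range.trans hs
  refine ⟨Function.extend (Fin.castLE hn) f fun _ => Classical.arbitrary α, ?_⟩
  rintro _ ⟨i, rfl⟩
  exact ⟨Fin.castLE hn i, (Fin.castLE_injective hn).extend_apply _ _ _⟩

theorem exists_measurable_partition_subset_of_subset_iUnion {α ι : Type*} [MeasurableSpace α]
    [LinearOrder ι] [LocallyFiniteOrderBot ι] [Countable ι] {S : Set α} {B : ι → Set α}
    (hS : MeasurableSet S) (hB : ∀ i, MeasurableSet (B i)) (hSB : S ⊆ ⋃ i, B i) :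
    ∃ V : ι → Set α, (∀ i, MeasurableSet (V i)) ∧ Pairwise (Function.onFun Disjoint V) ∧
      ⋃ i, V i = S ∧ ∀ i, V i ⊆ B i := by
  refine ⟨fun i => S ∩ disjointed B i, fun i => ?_, ?_, ?_, fun i => ?_⟩
  · dsimp only
    rw [disjointed_eq_inter_compl]
    exact hS.inter ((hB i).inter (.iInter fun j => .iInter fun _ => (hB j).compl))
  · exact fun i j hij => ((disjoint_disjointed B hij).inter_left' S).inter_right' S
  · rw [← inter_iUnion, iUnion_disjointed, inter_eq_left.2 hSB]
  · exact inter_subset_right.trans (disjointed_subset B i)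

theorem exists_fin_subset_iUnion_closedBall_of_packingNumber_le {X : Type*} [PseudoMetricSpace X]
    [Nonempty X] {A : Set X} {ε : ℝ≥0} {L : ℕ} (h : packingNumber ε A ≤ L) :
    ∃ x : Fin L → X, A ⊆ ⋃ i, closedBall (x i) ε := by
  have htop : packingNumber ε A ≠ ⊤ := ne_top_of_le_ne_top (by simp) h
  obtain ⟨x, hx⟩ :=
    exists_fin_subset_range_of_encard_le ((encard_maximalSeparatedSet htop).trans_le h)
  refine ⟨x, (isCover_iff_subset_iUnion_closedBall.1 (isCover_maximalSeparatedSet htop)).trans ?_⟩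
  refine iUnion₂_subset fun y hy => ?_
  obtain ⟨i, rfl⟩ := hx hy
  exact subset_iUnion (fun i => closedBall (x i) ε) i

section FiniteDimensional

variable {E : Type*} [NormedAddCommGroup E] [NormedSpace ℝ E] [FiniteDimensional ℝ E]

theorem card_le_of_isSeparated_subset_closedBall {s : Finset E} {c : E} {r : ℝ} {ε : ℝ≥0}
    (hr : 0 ≤ r) (hε : 0 < ε) (hs : ↑s ⊆ closedBall c r) (hsep : IsSeparated ε (s : Set E)) :
    (s.card : ℝ) ≤ (2 * r / ε + 1) ^ finrank ℝ E := by
  borelize E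
  set μ : Measure E := Measure.addHaar
  have hdisj : (s : Set E).PairwiseDisjoint fun x => closedBall x (ε / 2) := by
    intro x hx y hy hxy
    have h : (ε : ℝ≥0∞) < edist x y := hsep hx hy hxy
    rw [edist_dist, ← ENNReal.ofReal_coe_nnreal] at h
    exact closedBall_disjoint_closedBall (by linarith [(ENNReal.ofReal_lt_ofReal_iff'.1 h).1])
  have hunion : (⋃ x ∈ s, closedBall x (ε / 2)) ⊆ closedBall c (r + ε / 2) :=
    iUnion₂_subset fun x hx =>
      closedBall_subset_closedBall' (by linarith [mem_closedBall.1 (hs hx)])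
  have hunit : 0 < μ.real (closedBall 0 1) :=
    ENNReal.toReal_pos (measure_closedBall_pos μ _ one_pos).ne' measure_closedBall_lt_top.ne
  have hvol : (s.card : ℝ) * (ε / 2) ^ finrank ℝ E * μ.real (closedBall 0 1) ≤
      (r + ε / 2) ^ finrank ℝ E * μ.real (closedBall 0 1) :=
    calc (s.card : ℝ) * (ε / 2) ^ finrank ℝ E * μ.real (closedBall 0 1)
        = ∑ x ∈ s, μ.real (closedBall x (ε / 2)) := by
          simp [Measure.addHaar_real_closedBall' μ _ (by positivity : (0 : ℝ) ≤ ε / 2), mul_assoc]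
      _ = μ.real (⋃ x ∈ s, closedBall x (ε / 2)) :=
          (measureReal_biUnion_finset hdisj (fun _ _ => measurableSet_closedBall)
            fun _ _ => measure_closedBall_lt_top.ne).symm
      _ ≤ μ.real (closedBall c (r + ε / 2)) := measureReal_mono hunion measure_closedBall_lt_top.ne
      _ = (r + ε / 2) ^ finrank ℝ E * μ.real (closedBall 0 1) :=
          Measure.addHaar_real_closedBall' μ c (by positivity)
  calc (s.card : ℝ) ≤ ((r + ε / 2) / (ε / 2)) ^ finrank ℝ E := by
        rw [div_pow, le_div_iff₀ (by positivity)]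
        exact le_of_mul_le_mul_right hvol hunit
    _ = (2 * r / ε + 1) ^ finrank ℝ E := by
        congr 1
        field_simp

theorem packingNumber_closedBall_le {c : E} {r : ℝ} {ε : ℝ≥0} (hr : 0 ≤ r) (hε : 0 < ε) :
    packingNumber ε (closedBall c r) ≤ ⌊(2 * r / ε + 1) ^ finrank ℝ E⌋₊ := by
  refine iSup₂_le fun C hC => iSup_le fun hsep => ?_
  by_contra! hlt
  obtain ⟨t, htC, ht⟩ := Set.exists_subset_encard_eq (Order.add_one_le_of_lt hlt)
  obtain ⟨u, rfl⟩ := (Set.finite_of_encard_eq_coe ht).exists_finset_coe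
  have hu := card_le_of_isSeparated_subset_closedBall hr hε (htC.trans hC) (hsep.subset htC)
  rw [encard_coe_eq_coe_finsetCard] at ht
  norm_cast at ht
  have := Nat.le_floor hu
  omega

theorem exists_fin_closedBall_cover (c : E) {r : ℝ} (hr : 0 < r) {L : ℕ} (hL : 1 ≤ L) :
    ∃ x : Fin L → E,
      closedBall c r ⊆ ⋃ i, closedBall (x i) (3 * r * (L : ℝ) ^ (-(1 : ℝ) / finrank ℝ E)) := by
  set ε := 3 * r * (L : ℝ) ^ (-(1 : ℝ) / finrank ℝ E) with hε_def
  have hL0 : (0 : ℝ) < L := by exact_mod_cast hL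
  have hε : 0 < ε := by positivity
  rcases le_or_gt r ε with hrε | hεr
  · exact ⟨fun _ => c, fun y hy => mem_iUnion.2 ⟨⟨0, hL⟩, closedBall_subset_closedBall hrε hy⟩⟩
  have hd : finrank ℝ E ≠ 0 := by
    -- in dimension `0` the exponent is `-1 / 0 = 0`, so `ε = 3 * r`
    intro hd
    simp only [hε_def, hd, CharP.cast_eq_zero, div_zero, Real.rpow_zero] at hεr
    linarith
  have hpow : (2 * r / ε + 1) ^ finrank ℝ E ≤ L :=
    calc (2 * r / ε + 1) ^ finrank ℝ E ≤ (3 * r / ε) ^ finrank ℝ E := by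
          gcongr
          rw [div_add_one hε.ne', div_le_div_iff_of_pos_right hε]
          linarith
      _ = ((L : ℝ) ^ ((finrank ℝ E : ℝ)⁻¹)) ^ finrank ℝ E := by
          rw [hε_def, neg_div, one_div, Real.rpow_neg hL0.le]
          field_simp
      _ = L := Real.rpow_inv_natCast_pow hL0.le hd
  have hpack : packingNumber (Real.toNNReal ε) (closedBall c r) ≤ L := by
    refine (packingNumber_closedBall_le hr.le (Real.toNNReal_pos.2 hε)).trans ?_
    rw [Real.coe_toNNReal _ hε.le]
    exact_mod_cast Nat.floor_le_of_le hpow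
  simpa [Real.coe_toNNReal _ hε.le] using
    exists_fin_subset_iUnion_closedBall_of_packingNumber_le hpack

end FiniteDimensional

theorem closedBall_partition_small_diameter_general (m : ℕ) (r : ℝ) (hr : 0 < r)
    (L : ℕ) (hL : 1 ≤ L) :
    ∃ V : Fin L → Set (EuclideanSpace ℝ (Fin m)),
      (∀ i, MeasurableSet (V i)) ∧
      (Pairwise fun i j => Disjoint (V i) (V j)) ∧
      (⋃ i, V i) = Metric.closedBall (0 : EuclideanSpace ℝ (Fin m)) r ∧
      ∀ i, Metric.diam (V i) ≤ 6 * r * (L : ℝ) ^ (-(1:ℝ) / m) := by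
  obtain ⟨x, hx⟩ := exists_fin_closedBall_cover (0 : EuclideanSpace ℝ (Fin m)) hr hL
  rw [finrank_euclideanSpace_fin] at hx
  obtain ⟨V, hVmeas, hVdisj, hVunion, hVsub⟩ := exists_measurable_partition_subset_of_subset_iUnion
    measurableSet_closedBall (fun i => measurableSet_closedBall) hx
  refine ⟨V, hVmeas, hVdisj, hVunion, fun i => ?_⟩
  calc diam (V i) ≤ diam (closedBall (x i) (3 * r * (L : ℝ) ^ (-(1 : ℝ) / m))) :=
        diam_mono (hVsub i) isBounded_closedBall
    _ ≤ 2 * (3 * r * (L : ℝ) ^ (-(1 : ℝ) / m)) := diam_closedBall (by positivity)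
    _ = 6 * r * (L : ℝ) ^ (-(1 : ℝ) / m) := by ring

/-- The closed Euclidean ball of radius `r` in `ℝ^m` can be partitioned into `L` pairwise
disjoint measurable sets, each of diameter at most `6 r L^{-1/m}`. -/
theorem closedBall_partition_small_diameter (m : ℕ) (hm : 1 ≤ m) (r : ℝ) (hr : 0 < r)
    (L : ℕ) (hL : 1 ≤ L) :
    ∃ V : Fin L → Set (EuclideanSpace ℝ (Fin m)),
      (∀ i, MeasurableSet (V i)) ∧
      (Pairwise fun i j => Disjoint (V i) (V j)) ∧
      (⋃ i, V i) = Metric.closedBall (0 : EuclideanSpace ℝ (Fin m)) r ∧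
      ∀ i, Metric.diam (V i) ≤ 6 * r * (L : ℝ) ^ (-(1:ℝ) / m) :=
  closedBall_partition_small_diameter_general m r hr L hL
end

section
/- Let J and K be real symmetric d×d matrices such that K is positive semidefinite, J − K is positive semidefinite, and J ⪰ λ·I in the Loewner order for some λ > 0. Suppose moreover that K ⪯ φ·I for some φ with 0 ≤ φ ≤ λ/2. Then det J > 0, det(J − K) > 0, and ln( det J / det(J − K) ) ≤ 2 d φ / λ. -/
/-!
Since `J ⪰ λ I` and `K ⪯ φ I`, the matrix `J - K` dominates `(λ - φ) I`, so both `J` and `J - K`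
are positive definite, and `J = (J - K) + K ⪯ (1 + t) (J - K)` with `t = φ / (λ - φ)`.
The determinant is monotone in the Loewner order on positive definite matrices, hence
`det J ≤ (1 + t)^d det (J - K)`, and `log (1 + t) ≤ t ≤ 2 φ / λ` because `φ ≤ λ / 2`.
-/

open Matrix
open scoped MatrixOrder

theorem add_le_one_add_div_smul {M : Type*} [AddCommGroup M] [PartialOrder M]
    [IsOrderedAddMonoid M] [Module ℝ M] [PosSMulMono ℝ M] {e B C : M} {μ φ : ℝ}
    (hμ : 0 < μ) (hφ : 0 ≤ φ) (hB : μ • e ≤ B) (hC : C ≤ φ • e) :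
    B + C ≤ (1 + φ / μ) • B :=
  calc B + C ≤ B + φ • e := add_le_add_right hC B
    _ = B + (φ / μ) • (μ • e) := by rw [smul_smul, div_mul_cancel₀ _ hμ.ne']
    _ ≤ B + (φ / μ) • B := add_le_add_right (smul_le_smul_of_nonneg_left hB (by positivity)) B
    _ = (1 + φ / μ) • B := by rw [add_smul, one_smul]

namespace Matrix

variable {n : Type*} [DecidableEq n]

theorem posDef_of_smul_one_le {A : Matrix n n ℝ} {c : ℝ} (hc : 0 < c) (h : c • 1 ≤ A) :
    A.PosDef := by
  simpa using PosDef.posSemidef_add h (PosDef.one.smul hc)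

variable [Fintype n]

theorem one_le_det_of_one_le {N : Matrix n n ℝ} (h : 1 ≤ N) : 1 ≤ N.det := by
  have hM : (N - 1).PosSemidef := h
  have hN : N = cfc (fun x : ℝ => 1 + x) (N - 1) := by
    rw [cfc_const_add 1 (fun x => x) (N - 1), cfc_id' ℝ (N - 1), Algebra.algebraMap_eq_smul_one,
      one_smul, add_sub_cancel]
  rw [hN, hM.1.cfc_eq, IsHermitian.cfc, det_map, det_diagonal]
  exact Finset.one_le_prod fun i _ => by simpa using hM.eigenvalues_nonneg i

theorem det_le_det_of_le {A B : Matrix n n ℝ} (hA : A.PosDef) (h : A ≤ B) : A.det ≤ B.det := by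
  set R := CFC.sqrt A
  have hR : IsUnit R.det :=
    (isUnit_iff_isUnit_det R).mp ((CFC.isUnit_sqrt_iff A hA.posSemidef.nonneg).mpr hA.isUnit)
  have hRA : R⁻¹ * A * R⁻¹ = 1 := by
    rw [← CFC.sqrt_mul_sqrt_self A hA.posSemidef.nonneg, mul_assoc, mul_assoc,
      mul_nonsing_inv _ hR, mul_one, nonsing_inv_mul _ hR]
  have hRinv : IsSelfAdjoint R⁻¹ := (CFC.sqrt_nonneg A).isSelfAdjoint.isHermitian.inv
  have hB : 1 ≤ (R⁻¹ * B * R⁻¹).det :=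
    one_le_det_of_one_le (hRA ▸ hRinv.conjugate_le_conjugate h)
  have hdetA := congrArg det hRA
  simp only [det_mul, det_one] at hdetA hB
  nlinarith [hA.det_pos]

end Matrix

theorem logdet_ratio_le_general {d : ℕ} (J K : Matrix (Fin d) (Fin d) ℝ) (lam φ : ℝ)
    (hlam : 0 < lam) (hJlam : (J - lam • (1 : Matrix (Fin d) (Fin d) ℝ)).PosSemidef)
    (hφ0 : 0 ≤ φ) (hφ : φ ≤ lam / 2)
    (hKφ : (φ • (1 : Matrix (Fin d) (Fin d) ℝ) - K).PosSemidef) :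
    0 < J.det ∧ 0 < (J - K).det ∧
      Real.log (J.det / (J - K).det) ≤ 2 * d * φ / lam := by
  have hJ : lam • 1 ≤ J := hJlam
  have hK : K ≤ φ • 1 := hKφ
  have hμ : 0 < lam - φ := by linarith
  have hJK : (lam - φ) • 1 ≤ J - K := by rw [sub_smul]; exact sub_le_sub hJ hK
  have hJpd := posDef_of_smul_one_le hlam hJ
  have hJKpd := posDef_of_smul_one_le hμ hJK
  set t := φ / (lam - φ)
  have hle : J ≤ (1 + t) • (J - K) := by
    simpa using add_le_one_add_div_smul hμ hφ0 hJK hK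
  have hdet : J.det ≤ (1 + t) ^ d * (J - K).det := by
    simpa [det_smul] using det_le_det_of_le hJpd hle
  have ht : t ≤ 2 * φ / lam := by
    rw [div_le_div_iff₀ hμ hlam]; nlinarith
  refine ⟨hJpd.det_pos, hJKpd.det_pos, ?_⟩
  calc Real.log (J.det / (J - K).det) ≤ Real.log ((1 + t) ^ d) :=
        Real.log_le_log (div_pos hJpd.det_pos hJKpd.det_pos)
          ((div_le_iff₀ hJKpd.det_pos).mpr hdet)
    _ = d * Real.log (1 + t) := Real.log_pow (1 + t) d
    _ ≤ d * t := by
        gcongr; linarith [Real.log_le_sub_one_of_pos (by positivity : (0 : ℝ) < 1 + t)]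
    _ ≤ d * (2 * φ / lam) := by gcongr
    _ = 2 * d * φ / lam := by ring

/-- If `K ⪰ 0`, `J - K ⪰ 0`, `J ⪰ λ I` with `λ > 0` and `K ⪯ φ I` with `0 ≤ φ ≤ λ/2`,
then `ln(det J / det(J - K)) ≤ 2 d φ / λ`. -/
theorem logdet_ratio_le {d : ℕ} (J K : Matrix (Fin d) (Fin d) ℝ) (lam φ : ℝ)
    (hJsymm : J.IsSymm) (hKsymm : K.IsSymm)
    (hKpsd : K.PosSemidef) (hJK : (J - K).PosSemidef)
    (hlam : 0 < lam) (hJlam : (J - lam • (1 : Matrix (Fin d) (Fin d) ℝ)).PosSemidef)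
    (hφ0 : 0 ≤ φ) (hφ : φ ≤ lam / 2)
    (hKφ : (φ • (1 : Matrix (Fin d) (Fin d) ℝ) - K).PosSemidef) :
    0 < J.det ∧ 0 < (J - K).det ∧
      Real.log (J.det / (J - K).det) ≤ 2 * d * φ / lam :=
  logdet_ratio_le_general J K lam φ hlam hJlam hφ0 hφ hKφ
end

section
/- Fix B > 0 and θ ∈ ℝ. Then ∫_{−B}^{B} (y − θ)² φ(y − θ) dy + φ(B − θ)²/Q(B − θ) + φ(B + θ)²/Q(B + θ) = 1 − Σ_{s ∈ {B+θ, B−θ}} ( Q(s) + s φ(s) − φ(s)²/Q(s) ). -/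
/-- The standard Gaussian pdf. -/
noncomputable def gaussPdf (x : ℝ) : ℝ := (Real.sqrt (2 * Real.pi))⁻¹ * Real.exp (-x ^ 2 / 2)

/-- The standard Gaussian complementary cdf `Q(x) = ∫_x^∞ φ(t) dt`. -/
noncomputable def gaussQ (x : ℝ) : ℝ := ∫ t in Set.Ioi x, gaussPdf t

lemma gaussPdf_cont : Continuous gaussPdf := by
  unfold gaussPdf
  continuity

lemma gaussPdf_integrable : MeasureTheory.Integrable gaussPdf := by
  have h : MeasureTheory.Integrable (fun x : ℝ => Real.exp (-(1/2) * x ^ 2)) :=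
    integrable_exp_neg_mul_sq (by norm_num)
  have := h.const_mul (Real.sqrt (2 * Real.pi))⁻¹
  refine this.congr ?_
  filter_upwards with x
  unfold gaussPdf
  ring_nf

lemma gaussPdf_total : ∫ x : ℝ, gaussPdf x = 1 := by
  unfold gaussPdf
  rw [MeasureTheory.integral_const_mul]
  have h : ∫ x : ℝ, Real.exp (-x ^ 2 / 2) = ∫ x : ℝ, Real.exp (-(1/2) * x ^ 2) := by
    congr 1; ext x; ring_nf
  rw [h, integral_gaussian, show Real.pi / (1/2) = 2 * Real.pi by ring]
  exact inv_mul_cancel₀ (by positivity)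

lemma gaussQ_sub {a b : ℝ} (hab : a ≤ b) : gaussQ a - gaussQ b = ∫ t in a..b, gaussPdf t := by
  unfold gaussQ
  rw [intervalIntegral.integral_of_le hab]
  have : Set.Ioi a = Set.Ioc a b ∪ Set.Ioi b := (Set.Ioc_union_Ioi_eq_Ioi hab).symm
  rw [this, MeasureTheory.setIntegral_union (Set.Ioc_disjoint_Ioi le_rfl) measurableSet_Ioi
    gaussPdf_integrable.integrableOn gaussPdf_integrable.integrableOn]
  ring

lemma gaussQ_neg (x : ℝ) : gaussQ (-x) = 1 - gaussQ x := by
  have h1 : (∫ t in Set.Iic x, gaussPdf t) + ∫ t in Set.Ioi x, gaussPdf t = 1 := by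
    rw [intervalIntegral.integral_Iic_add_Ioi gaussPdf_integrable.integrableOn
      gaussPdf_integrable.integrableOn, gaussPdf_total]
  have h2 : gaussQ (-x) = ∫ t in Set.Iic x, gaussPdf t := by
    unfold gaussQ
    have e1 : (∫ t in Set.Ioi (-x), gaussPdf t) = ∫ t in Set.Ioi (-x), gaussPdf (-t) := by
      refine MeasureTheory.setIntegral_congr_fun measurableSet_Ioi fun t _ => ?_
      unfold gaussPdf; ring_nf
    rw [e1, integral_comp_neg_Ioi, neg_neg]
  unfold gaussQ at *
  linarith

lemma gaussQ_hasDeriv (x : ℝ) : HasDerivAt gaussQ (-gaussPdf x) x := by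
  have key : ∀ y : ℝ, gaussQ y = gaussQ 0 - ∫ t in (0:ℝ)..y, gaussPdf t := by
    intro y
    rcases le_total 0 y with h | h
    · have := gaussQ_sub h; linarith
    · have := gaussQ_sub h
      rw [intervalIntegral.integral_symm]
      linarith
  have hd : HasDerivAt (fun u => ∫ t in (0:ℝ)..u, gaussPdf t) (gaussPdf x) x :=
    intervalIntegral.integral_hasDerivAt_right
      (gaussPdf_cont.intervalIntegrable 0 x)
      (gaussPdf_cont.aestronglyMeasurable.stronglyMeasurableAtFilter)
      gaussPdf_cont.continuousAt
  have : HasDerivAt (fun u => gaussQ 0 - ∫ t in (0:ℝ)..u, gaussPdf t) (-gaussPdf x) x := by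
    simpa using (hd.const_sub (gaussQ 0))
  refine this.congr_of_eventuallyEq ?_
  filter_upwards with y using (key y)

lemma gaussPdf_hasDeriv (x : ℝ) : HasDerivAt gaussPdf (-x * gaussPdf x) x := by
  unfold gaussPdf
  have h1 : HasDerivAt (fun u : ℝ => -u ^ 2 / 2) (-x) x := by
    have : HasDerivAt (fun u : ℝ => u ^ 2) (2 * x) x := by
      simpa using (hasDerivAt_pow 2 x)
    have := ((this.neg).div_const 2)
    simpa using this.congr_deriv (by ring)
  have h2 := (h1.exp).const_mul (Real.sqrt (2 * Real.pi))⁻¹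
  exact h2.congr_deriv (by ring)

lemma key_integral (a b : ℝ) (hab : a ≤ b) :
    ∫ t in a..b, t ^ 2 * gaussPdf t =
      (gaussQ a - gaussQ b) - b * gaussPdf b + a * gaussPdf a := by
  have hF : ∀ x : ℝ, HasDerivAt (fun t => -gaussQ t - t * gaussPdf t) (x ^ 2 * gaussPdf x) x := by
    intro x
    have h1 := (gaussQ_hasDeriv x).neg
    have h2 := (hasDerivAt_id x).mul (gaussPdf_hasDeriv x)
    have := h1.sub h2
    exact this.congr_deriv (by simp only [id_eq]; ring)
  have hint : IntervalIntegrable (fun t => t ^ 2 * gaussPdf t) MeasureTheory.volume a b :=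
    (Continuous.mul (by continuity) gaussPdf_cont).intervalIntegrable a b
  rw [intervalIntegral.integral_eq_sub_of_hasDerivAt (fun x _ => hF x) hint]
  ring

/-- Fisher information of the clipped Gaussian observation:
`∫_{-B}^{B} (y-θ)² φ(y-θ) dy + φ(B-θ)²/Q(B-θ) + φ(B+θ)²/Q(B+θ)
  = 1 - Σ_{s ∈ {B+θ, B-θ}} (Q(s) + s φ(s) - φ(s)²/Q(s))`. -/
theorem clipped_gaussian_fisher (B θ : ℝ) (hB : 0 < B) :
    (∫ y in (-B)..B, (y - θ) ^ 2 * gaussPdf (y - θ)) +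
      (gaussPdf (B - θ)) ^ 2 / gaussQ (B - θ) +
      (gaussPdf (B + θ)) ^ 2 / gaussQ (B + θ) =
    1 - ((gaussQ (B + θ) + (B + θ) * gaussPdf (B + θ) -
            (gaussPdf (B + θ)) ^ 2 / gaussQ (B + θ)) +
         (gaussQ (B - θ) + (B - θ) * gaussPdf (B - θ) -
            (gaussPdf (B - θ)) ^ 2 / gaussQ (B - θ))) := by
  have hsub : (∫ y in (-B)..B, (y - θ) ^ 2 * gaussPdf (y - θ))
      = ∫ t in (-B - θ)..(B - θ), t ^ 2 * gaussPdf t := by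
    rw [← intervalIntegral.integral_comp_sub_right (fun t => t ^ 2 * gaussPdf t) θ]
  have hkey := key_integral (-B - θ) (B - θ) (by linarith)
  have hneg : gaussQ (-B - θ) = 1 - gaussQ (B + θ) := by
    have := gaussQ_neg (B + θ); rw [show -(B + θ) = -B - θ by ring] at this; exact this
  have hpdf : gaussPdf (-B - θ) = gaussPdf (B + θ) := by
    unfold gaussPdf; ring_nf
  rw [hsub, hkey, hneg, hpdf]
  ring
end

section
/- Let (Ω, 𝓕, P) be a probability space, d ≥ 1 and ε > 0, and let X : Ω → ℝ^d be a random vector with E[‖X‖^{2+ε}] < ∞; set K := ( E[‖X‖^{2+ε}] )^{2/(2+ε)}. Let A₀, A₁, …, A_L be measurable sets partitioning Ω with P(A_ℓ) > 0 for every ℓ = 0, 1, …, L, and suppose there is D ≥ 0 such that for each ℓ ∈ {1, …, L}, ‖X(ω) − X(ω′)‖ ≤ D for almost every pair ω, ω′ ∈ A_ℓ. Then for every v ∈ ℝ^d, Σ_{ℓ=1}^{L} E[ ⟨v, X − E[X | A_ℓ]⟩² · 1_{A_ℓ} ] + E[ ⟨v, X − E[X | A₀]⟩² · 1_{A₀}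 ] ≤ ( D² + K · P(A₀)^{ε/(2+ε)} ) · ‖v‖², where E[X | A] denotes the conditional expectation vector E[X · 1_A]/P(A) and ⟨·,·⟩ the Euclidean inner product. -/
open MeasureTheory Set
open scoped RealInnerProductSpace

/-!
The mean minimizes the mean-square deviation, so on a bin `A ℓ`, `ℓ ≥ 1`, we may centre `X` at
its value `X ω₀` at a typical point of the bin instead of at its mean; this costs at most
`(‖v‖ D)² P(A ℓ)`, and these sum to at most `(‖v‖ D)²` because the bins are disjoint. On the tail
bin we centre at `0` instead and bound `E[‖X‖² 1_{A₀}]` by Hölder's inequality with the conjugate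
exponents `(2 + ε) / 2` and `(2 + ε) / ε`.
-/

section
variable {α : Type*} [MeasurableSpace α] {μ : Measure α}

theorem integral_sub_average_sq_le [IsFiniteMeasure μ] {f : α → ℝ} (hf : MemLp f 2 μ) (c : ℝ) :
    ∫ x, (f x - ⨍ y, f y ∂μ) ^ 2 ∂μ ≤ ∫ x, (f x - c) ^ 2 ∂μ := by
  set m := ⨍ y, f y ∂μ
  have hdev : MemLp (fun x => f x - m) 2 μ := hf.sub (memLp_const m)
  have hcross : ∫ x, 2 * (m - c) * (f x - m) ∂μ = 0 := by
    rw [integral_const_mul, integral_sub_average, mul_zero]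
  have hexpand : ∫ x, (f x - c) ^ 2 ∂μ = ∫ x, (f x - m) ^ 2 ∂μ + μ.real univ * (m - c) ^ 2 := by
    calc ∫ x, (f x - c) ^ 2 ∂μ
        = ∫ x, ((f x - m) ^ 2 + 2 * (m - c) * (f x - m) + (m - c) ^ 2) ∂μ := by
          congr 1 with x; ring
      _ = ∫ x, (f x - m) ^ 2 ∂μ + μ.real univ * (m - c) ^ 2 := by
          have hlin := (hdev.integrable one_le_two).const_mul (2 * (m - c))
          rw [integral_add _ (integrable_const _), integral_add hdev.integrable_sq hlin, hcross,
            integral_const, smul_eq_mul, add_zero]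
          exact hdev.integrable_sq.add hlin
  rw [hexpand]
  exact le_add_of_nonneg_right (by positivity)

theorem integral_le_integral_rpow_mul_measureReal [IsFiniteMeasure μ] {g : α → ℝ} {p q : ℝ}
    (hpq : p.HolderConjugate q) (hg0 : 0 ≤ᵐ[μ] g) (hg : MemLp g (ENNReal.ofReal p) μ) :
    ∫ x, g x ∂μ ≤ (∫ x, g x ^ p ∂μ) ^ (1 / p) * μ.real univ ^ (1 / q) := by
  simpa using integral_mul_le_Lp_mul_Lq_of_nonneg hpq hg0 (ae_of_all _ fun _ => zero_le_one) hg
    (memLp_const (1 : ℝ))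

theorem sum_measureReal_le_one [IsZeroOrProbabilityMeasure μ] {ι : Type*} {s : Finset ι}
    {A : ι → Set α} (hd : (s : Set ι).PairwiseDisjoint A) (hm : ∀ i ∈ s, MeasurableSet (A i)) :
    ∑ i ∈ s, μ.real (A i) ≤ 1 := by
  rw [← measureReal_biUnion_finset hd hm]
  exact measureReal_le_one

section NormedGroup
variable {F : Type*} [NormedAddCommGroup F]

theorem exists_ae_restrict_norm_sub_le [SFinite μ] {X : α → F} {s : Set α} (hs : MeasurableSet s)
    (hs0 : μ s ≠ 0) {D : ℝ}
    (h : ∀ᵐ q ∂μ.prod μ, q.1 ∈ s → q.2 ∈ s → ‖X q.1 - X q.2‖ ≤ D) :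
    ∃ x₀, ∀ᵐ x ∂μ.restrict s, ‖X x - x₀‖ ≤ D := by
  obtain ⟨x₀, hx₀s, hx₀⟩ :=
    ((frequently_ae_mem_iff.mpr hs0).and_eventually (Measure.ae_ae_of_ae_prod h)).exists
  refine ⟨X x₀, ?_⟩
  filter_upwards [ae_restrict_of_ae hx₀, ae_restrict_mem hs] with x hx hxs
  rw [norm_sub_rev]
  exact hx hx₀s hxs

theorem integral_norm_sq_le [IsFiniteMeasure μ] {X : α → F} {r q : ℝ}
    (hrq : (r / 2).HolderConjugate q) (hX : MemLp X (ENNReal.ofReal r) μ) :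
    ∫ x, ‖X x‖ ^ 2 ∂μ ≤ (∫ x, ‖X x‖ ^ r ∂μ) ^ (2 / r) * μ.real univ ^ (1 / q) := by
  have hsq : MemLp (fun x => ‖X x‖ ^ 2) (ENNReal.ofReal (r / 2)) μ := by
    simpa [ENNReal.ofReal_div_of_pos two_pos] using hX.norm_rpow_div 2
  have hpow : ∀ x, (‖X x‖ ^ 2) ^ (r / 2) = ‖X x‖ ^ r := fun x => by
    rw [← Real.rpow_natCast, ← Real.rpow_mul (norm_nonneg _)]
    congr 1; push_cast; ring
  simpa only [hpow, one_div_div] using integral_le_integral_rpow_mul_measureReal hrq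
    (ae_of_all _ fun x => sq_nonneg ‖X x‖) hsq

end NormedGroup

variable {E : Type*} [NormedAddCommGroup E] [InnerProductSpace ℝ E]

theorem inner_average [CompleteSpace E] {X : α → E} (hX : Integrable X μ) (v : E) :
    ⟪v, ⨍ x, X x ∂μ⟫ = ⨍ x, ⟪v, X x⟫ ∂μ := by
  rw [average_eq, average_eq, real_inner_smul_right, integral_inner hX, smul_eq_mul]

theorem real_inner_sq_le_of_norm_le (v : E) {y : E} {D : ℝ} (h : ‖y‖ ≤ D) :
    ⟪v, y⟫ ^ 2 ≤ (‖v‖ * D) ^ 2 := by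
  rw [← sq_abs]
  exact pow_le_pow_left₀ (abs_nonneg _)
    ((abs_real_inner_le_norm v y).trans (mul_le_mul_of_nonneg_left h (norm_nonneg v))) 2

variable [CompleteSpace E]

theorem integral_inner_sub_average_sq_le [IsFiniteMeasure μ] {X : α → E} (hX : MemLp X 2 μ)
    (v c : E) :
    ∫ x, ⟪v, X x - ⨍ y, X y ∂μ⟫ ^ 2 ∂μ ≤ ∫ x, ⟪v, X x - c⟫ ^ 2 ∂μ := by
  simp_rw [inner_sub_right, inner_average (hX.integrable one_le_two) v]
  exact integral_sub_average_sq_le (hX.const_inner v) _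

theorem integral_inner_sub_average_sq_le_of_ae_norm_sub_le [IsFiniteMeasure μ] {X : α → E}
    (hX : AEStronglyMeasurable X μ) {x₀ : E} {D : ℝ} (hD : ∀ᵐ x ∂μ, ‖X x - x₀‖ ≤ D) (v : E) :
    ∫ x, ⟪v, X x - ⨍ y, X y ∂μ⟫ ^ 2 ∂μ ≤ (‖v‖ * D) ^ 2 * μ.real univ := by
  have hX2 : MemLp X 2 μ := MemLp.of_bound hX (‖x₀‖ + D) <|
    hD.mono fun x hx => (norm_le_norm_add_norm_sub' (X x) x₀).trans (by linarith)
  calc ∫ x, ⟪v, X x - ⨍ y, X y ∂μ⟫ ^ 2 ∂μ ≤ ∫ x, ⟪v, X x - x₀⟫ ^ 2 ∂μ :=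
        integral_inner_sub_average_sq_le hX2 v x₀
    _ ≤ ∫ _, (‖v‖ * D) ^ 2 ∂μ :=
        integral_mono_of_nonneg (ae_of_all _ fun _ => sq_nonneg _) (integrable_const _)
          (hD.mono fun _ hx => real_inner_sq_le_of_norm_le v hx)
    _ = (‖v‖ * D) ^ 2 * μ.real univ := by rw [integral_const, smul_eq_mul, mul_comm]

theorem integral_inner_sub_average_sq_le_of_memLp [IsFiniteMeasure μ] {X : α → E} {r q : ℝ}
    (hrq : (r / 2).HolderConjugate q) (hX : MemLp X (ENNReal.ofReal r) μ) (v : E) :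
    ∫ x, ⟪v, X x - ⨍ y, X y ∂μ⟫ ^ 2 ∂μ ≤
      ‖v‖ ^ 2 * ((∫ x, ‖X x‖ ^ r ∂μ) ^ (2 / r) * μ.real univ ^ (1 / q)) := by
  have hX2 : MemLp X 2 μ := hX.mono_exponent <| by
    rw [← ENNReal.ofReal_ofNat 2]
    exact ENNReal.ofReal_le_ofReal (by linarith [hrq.lt])
  calc ∫ x, ⟪v, X x - ⨍ y, X y ∂μ⟫ ^ 2 ∂μ ≤ ∫ x, ⟪v, X x - 0⟫ ^ 2 ∂μ :=
        integral_inner_sub_average_sq_le hX2 v 0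
    _ ≤ ∫ x, ‖v‖ ^ 2 * ‖X x‖ ^ 2 ∂μ :=
        integral_mono_of_nonneg (ae_of_all _ fun _ => sq_nonneg _)
          ((hX2.integrable_norm_pow two_ne_zero).const_mul _) (ae_of_all _ fun x => by
            simpa [mul_pow] using real_inner_sq_le_of_norm_le v (le_refl ‖X x‖))
    _ ≤ ‖v‖ ^ 2 * ((∫ x, ‖X x‖ ^ r ∂μ) ^ (2 / r) * μ.real univ ^ (1 / q)) := by
        rw [integral_const_mul]
        exact mul_le_mul_of_nonneg_left (integral_norm_sq_le hrq hX) (sq_nonneg _)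

theorem setIntegral_inner_sub_setAverage_sq_le_of_ae_prod [IsFiniteMeasure μ] {X : α → E}
    (hX : AEStronglyMeasurable X μ) {s : Set α} (hs : MeasurableSet s) (hs0 : μ s ≠ 0) {D : ℝ}
    (h : ∀ᵐ q ∂μ.prod μ, q.1 ∈ s → q.2 ∈ s → ‖X q.1 - X q.2‖ ≤ D) (v : E) :
    ∫ x in s, ⟪v, X x - ⨍ y in s, X y ∂μ⟫ ^ 2 ∂μ ≤ (‖v‖ * D) ^ 2 * μ.real s := by
  obtain ⟨x₀, hx₀⟩ := exists_ae_restrict_norm_sub_le hs hs0 h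
  rw [← measureReal_restrict_apply_univ]
  exact integral_inner_sub_average_sq_le_of_ae_norm_sub_le hX.restrict hx₀ v

theorem setIntegral_inner_sub_setAverage_sq_le_of_memLp [IsFiniteMeasure μ] {X : α → E}
    {r q : ℝ} (hrq : (r / 2).HolderConjugate q) (hX : MemLp X (ENNReal.ofReal r) μ) (s : Set α)
    (v : E) :
    ∫ x in s, ⟪v, X x - ⨍ y in s, X y ∂μ⟫ ^ 2 ∂μ ≤
      ‖v‖ ^ 2 * ((∫ x, ‖X x‖ ^ r ∂μ) ^ (2 / r) * μ.real s ^ (1 / q)) := by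
  have hr : 0 < r := by linarith [hrq.lt]
  have hint : Integrable (fun x => ‖X x‖ ^ r) μ := by
    simpa [ENNReal.toReal_ofReal hr.le] using
      hX.integrable_norm_rpow (ENNReal.ofReal_pos.mpr hr).ne' ENNReal.ofReal_ne_top
  have hset : ∫ x in s, ‖X x‖ ^ r ∂μ ≤ ∫ x, ‖X x‖ ^ r ∂μ :=
    setIntegral_le_integral hint (ae_of_all _ fun x => by positivity)
  refine (integral_inner_sub_average_sq_le_of_memLp hrq (hX.restrict s) v).trans ?_
  rw [measureReal_restrict_apply_univ]
  gcongr

end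

theorem conditional_covariance_bound_general {Ω : Type*} [MeasureSpace Ω]
    (hP : IsProbabilityMeasure (volume : Measure Ω))
    (d : ℕ) (ε : ℝ) (hε : 0 < ε)
    (X : Ω → EuclideanSpace ℝ (Fin d)) (hX : Measurable X)
    (hmom : Integrable fun ω => ‖X ω‖ ^ (2 + ε))
    (K : ℝ) (hK : K = (∫ ω, ‖X ω‖ ^ (2 + ε)) ^ (2 / (2 + ε)))
    (L : ℕ) (A : ℕ → Set Ω)
    (hmeas : ∀ ℓ ≤ L, MeasurableSet (A ℓ))
    (hApos : ∀ ℓ ≤ L, 0 < volume (A ℓ))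
    (hdisj : ∀ ℓ ≤ L, ∀ ℓ' ≤ L, ℓ ≠ ℓ' → Disjoint (A ℓ) (A ℓ'))
    (D : ℝ)
    (hdiam : ∀ ℓ, 1 ≤ ℓ → ℓ ≤ L →
      ∀ᵐ q : Ω × Ω ∂((volume : Measure Ω).prod volume),
        q.1 ∈ A ℓ → q.2 ∈ A ℓ → ‖X q.1 - X q.2‖ ≤ D)
    (mA : ℕ → EuclideanSpace ℝ (Fin d))
    (hmA : ∀ ℓ ≤ L, mA ℓ = ((volume (A ℓ)).toReal)⁻¹ • ∫ ω in A ℓ, X ω) :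
    ∀ v : EuclideanSpace ℝ (Fin d),
      (∑ ℓ ∈ Finset.Icc 1 L, ∫ ω in A ℓ, ⟪v, X ω - mA ℓ⟫ ^ 2) +
        (∫ ω in A 0, ⟪v, X ω - mA 0⟫ ^ 2) ≤
      (D ^ 2 + K * ((volume (A 0)).toReal) ^ (ε / (2 + ε))) * ‖v‖ ^ 2 := by
  intro v
  have hmean : ∀ ℓ ≤ L, mA ℓ = ⨍ ω in A ℓ, X ω := fun ℓ hℓ => by
    rw [hmA ℓ hℓ, setAverage_eq, measureReal_def]
  have hXp : MemLp X (ENNReal.ofReal (2 + ε)) := by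
    rw [← integrable_norm_rpow_iff hX.aestronglyMeasurable
      (ENNReal.ofReal_pos.mpr (by positivity)).ne' ENNReal.ofReal_ne_top]
    simpa [ENNReal.toReal_ofReal (by positivity : (0:ℝ) ≤ 2 + ε)] using hmom
  have hconj : ((2 + ε) / 2).HolderConjugate ((2 + ε) / ε) := by
    simpa only [one_div_div] using Real.holderConjugate_one_div (a := 2 / (2 + ε))
      (b := ε / (2 + ε)) (by positivity) (by positivity) (by field_simp)
  have hblock : ∀ ℓ ∈ Finset.Icc 1 L,
      ∫ ω in A ℓ, ⟪v, X ω - mA ℓ⟫ ^ 2 ≤ (‖v‖ * D) ^ 2 * volume.real (A ℓ) := by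
    intro ℓ hℓ
    obtain ⟨h1ℓ, hℓL⟩ := Finset.mem_Icc.mp hℓ
    rw [hmean ℓ hℓL]
    exact setIntegral_inner_sub_setAverage_sq_le_of_ae_prod hX.aestronglyMeasurable
      (hmeas ℓ hℓL) (hApos ℓ hℓL).ne' (hdiam ℓ h1ℓ hℓL) v
  have htail : ∫ ω in A 0, ⟪v, X ω - mA 0⟫ ^ 2 ≤
      ‖v‖ ^ 2 * (K * volume.real (A 0) ^ (ε / (2 + ε))) := by
    rw [hmean 0 L.zero_le, hK, ← one_div_div (2 + ε) ε]
    exact setIntegral_inner_sub_setAverage_sq_le_of_memLp hconj hXp (A 0) v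
  have hsum : ∑ ℓ ∈ Finset.Icc 1 L, volume.real (A ℓ) ≤ 1 :=
    sum_measureReal_le_one
      (fun i hi j hj => hdisj i (Finset.mem_Icc.mp hi).2 j (Finset.mem_Icc.mp hj).2)
      (fun i hi => hmeas i (Finset.mem_Icc.mp hi).2)
  calc (∑ ℓ ∈ Finset.Icc 1 L, ∫ ω in A ℓ, ⟪v, X ω - mA ℓ⟫ ^ 2) +
        (∫ ω in A 0, ⟪v, X ω - mA 0⟫ ^ 2)
      ≤ (‖v‖ * D) ^ 2 * ∑ ℓ ∈ Finset.Icc 1 L, volume.real (A ℓ) +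
          ‖v‖ ^ 2 * (K * volume.real (A 0) ^ (ε / (2 + ε))) := by
        rw [Finset.mul_sum]
        exact add_le_add (Finset.sum_le_sum hblock) htail
    _ ≤ (‖v‖ * D) ^ 2 * 1 + ‖v‖ ^ 2 * (K * volume.real (A 0) ^ (ε / (2 + ε))) := by
        gcongr
    _ = (D ^ 2 + K * ((volume (A 0)).toReal) ^ (ε / (2 + ε))) * ‖v‖ ^ 2 := by
        rw [measureReal_def]; ring

/-- Averaged conditional covariance bound for a random vector `X` with finite `(2+ε)`-moment,
given a partition `A₀, A₁, …, A_L` where `X` varies by at most `D` on each `A_ℓ`, `ℓ ≥ 1`: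
for every direction `v`,
`Σ_{ℓ=1}^L E[⟨v, X - E[X|A_ℓ]⟩² 1_{A_ℓ}] + E[⟨v, X - E[X|A₀]⟩² 1_{A₀}]
  ≤ (D² + K P(A₀)^{ε/(2+ε)}) ‖v‖²` with `K = (E‖X‖^{2+ε})^{2/(2+ε)}`. -/
theorem conditional_covariance_bound {Ω : Type*} [MeasureSpace Ω]
    (hP : IsProbabilityMeasure (volume : Measure Ω))
    (d : ℕ) (hd : 1 ≤ d) (ε : ℝ) (hε : 0 < ε)
    (X : Ω → EuclideanSpace ℝ (Fin d)) (hX : Measurable X)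
    (hmom : Integrable fun ω => ‖X ω‖ ^ (2 + ε))
    (K : ℝ) (hK : K = (∫ ω, ‖X ω‖ ^ (2 + ε)) ^ (2 / (2 + ε)))
    (L : ℕ) (A : ℕ → Set Ω)
    (hmeas : ∀ ℓ ≤ L, MeasurableSet (A ℓ))
    (hApos : ∀ ℓ ≤ L, 0 < volume (A ℓ))
    (hdisj : ∀ ℓ ≤ L, ∀ ℓ' ≤ L, ℓ ≠ ℓ' → Disjoint (A ℓ) (A ℓ'))
    (hcover : (⋃ ℓ ∈ Finset.range (L + 1), A ℓ) = Set.univ)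
    (D : ℝ) (hD : 0 ≤ D)
    (hdiam : ∀ ℓ, 1 ≤ ℓ → ℓ ≤ L →
      ∀ᵐ q : Ω × Ω ∂((volume : Measure Ω).prod volume),
        q.1 ∈ A ℓ → q.2 ∈ A ℓ → ‖X q.1 - X q.2‖ ≤ D)
    (mA : ℕ → EuclideanSpace ℝ (Fin d))
    (hmA : ∀ ℓ ≤ L, mA ℓ = ((volume (A ℓ)).toReal)⁻¹ • ∫ ω in A ℓ, X ω) :
    ∀ v : EuclideanSpace ℝ (Fin d),
      (∑ ℓ ∈ Finset.Icc 1 L, ∫ ω in A ℓ, ⟪v, X ω - mA ℓ⟫ ^ 2) +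
        (∫ ω in A 0, ⟪v, X ω - mA 0⟫ ^ 2) ≤
      (D ^ 2 + K * ((volume (A 0)).toReal) ^ (ε / (2 + ε))) * ‖v‖ ^ 2 :=
  conditional_covariance_bound_general hP d ε hε X hX hmom K hK L A hmeas hApos hdisj D hdiam mA hmA
end
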